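/- Define V(x;τ) = A*(τ) + C*(τ)·log x with A*(τ) = ((e^{δτ} − γ)/(e^{δτ} − 1)²)·K·τ and C*(τ) = (1−γ)/(e^{δτ} − 1), where K = r + ‖ξ̃‖²/2 > 0, δ > 0, γ ∈ (0,1), x > 0. If K/δ + log x < 0, then lim_{τ→0+} V(x;τ) = −∞, lim_{τ→∞} V(x;τ) = 0, and there exists τ₀ > 0 with V(x;τ₀) > 0; consequently V(x;·) attains a positive maximum at some τ* ∈ (0,∞). -/

import Mathlib

open Set Filter Topology Real

/-!
Write `E = exp (δ τ)`. Near `τ = 0` we have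
`V = (1-γ)/(E-1) · [(E-γ)/(1-γ) · τ/(E-1) · K + log x]`: the prefactor blows up while the
bracket tends to `K/δ + log x < 0`. At infinity, in terms of `e = exp (-δ τ)`,
`V = (1-γe)/(1-e)² · K · τe + (1-γ) · e/(1-e) · log x → 0`. Since `(E-γ)/(E-1) ≥ 1`, `V` is
positive as soon as `K τ + (1-γ) log x > 0`. A continuous function on `(0, ∞)` with a positive
value that is eventually below it at both ends attains its maximum.
-/

theorem exists_isMaxOn_Ioi_of_eventually_le {α β : Type*} [ConditionallyCompleteLinearOrder α]
    [TopologicalSpace α] [OrderTopology α] [DenselyOrdered α] [NoMaxOrder α] [LinearOrder β]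
    [TopologicalSpace β] [ClosedIciTopology β] {f : α → β} {a y : α}
    (hf : ContinuousOn f (Ioi a)) (hy : a < y)
    (hleft : ∀ᶠ t in 𝓝[>] a, f t ≤ f y) (hright : ∀ᶠ t in atTop, f t ≤ f y) :
    ∃ c, a < c ∧ IsMaxOn f (Ioi a) c := by
  obtain ⟨u, hau, hu⟩ := mem_nhdsGT_iff_exists_Ioc_subset.mp hleft
  obtain ⟨b, hb⟩ := eventually_atTop.mp hright
  have hyI : y ∈ Icc (min u y) (max b y) := ⟨min_le_right _ _, le_max_right _ _⟩
  have hsub : Icc (min u y) (max b y) ⊆ Ioi a := fun t ht => (lt_min hau hy).trans_le ht.1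
  obtain ⟨c, hc, hmax⟩ := isCompact_Icc.exists_isMaxOn ⟨y, hyI⟩ (hf.mono hsub)
  refine ⟨c, hsub hc, fun t ht => ?_⟩
  have hyc : f y ≤ f c := hmax hyI
  rcases lt_or_ge t (min u y) with htu | htu
  · exact (hu ⟨ht, (htu.trans_le (min_le_left _ _)).le⟩).trans hyc
  rcases le_or_gt t (max b y) with htb | htb
  · exact hmax ⟨htu, htb⟩
  · exact (hb t ((le_max_left _ _).trans htb.le)).trans hyc

theorem tendsto_div_exp_mul_sub_one {δ : ℝ} (hδ : δ ≠ 0) :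
    Tendsto (fun τ => τ / (exp (δ * τ) - 1)) (𝓝[≠] 0) (𝓝 δ⁻¹) := by
  have hderiv : HasDerivAt (fun τ => exp (δ * τ)) δ 0 := by
    simpa using ((hasDerivAt_id (0 : ℝ)).const_mul δ).exp
  refine ((hasDerivAt_iff_tendsto_slope.mp hderiv).inv₀ hδ).congr fun τ => ?_
  simp [slope_def_field, inv_div]

noncomputable def V (δ γ K x τ : ℝ) : ℝ :=
  (Real.exp (δ*τ) - γ)/(Real.exp (δ*τ) - 1)^2 * K * τ
    + (1-γ)/(Real.exp (δ*τ) - 1) * Real.log x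

section V

variable {δ γ K x τ : ℝ}

theorem exp_mul_sub_one_ne_zero (hδ : δ ≠ 0) (hτ : τ ≠ 0) : exp (δ * τ) - 1 ≠ 0 := by
  simpa [sub_eq_zero, exp_eq_one_iff] using And.intro hδ hτ

theorem continuousOn_V (hδ : δ ≠ 0) : ContinuousOn (V δ γ K x) {0}ᶜ := by
  intro τ hτ
  have hE₁ := exp_mul_sub_one_ne_zero hδ hτ
  have hE₂ := pow_ne_zero 2 hE₁
  exact ContinuousAt.continuousWithinAt (by unfold V; fun_prop (disch := assumption))

theorem V_eq_mul_of_ne_zero (hγ : γ ≠ 1) (hδ : δ ≠ 0) (hτ : τ ≠ 0) :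
    V δ γ K x τ = (1 - γ) / (exp (δ * τ) - 1) *
      ((exp (δ * τ) - γ) / (1 - γ) * (τ / (exp (δ * τ) - 1)) * K + log x) := by
  have hE := exp_mul_sub_one_ne_zero hδ hτ
  have hγ' : 1 - γ ≠ 0 := sub_ne_zero.mpr hγ.symm
  unfold V
  field_simp

theorem tendsto_V_nhdsGT_zero (hδ : 0 < δ) (hγ : γ < 1) (hcond : K / δ + log x < 0) :
    Tendsto (V δ γ K x) (𝓝[>] 0) atBot := by
  have hE : Tendsto (fun τ => exp (δ * τ) - 1) (𝓝[>] 0) (𝓝[>] 0) := by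
    refine tendsto_nhdsWithin_iff.mpr ⟨?_, eventually_mem_nhdsWithin.mono fun τ hτ => ?_⟩
    · exact (Continuous.tendsto' (by fun_prop) 0 0 (by simp)).mono_left nhdsWithin_le_nhds
    · exact sub_pos.mpr (one_lt_exp_iff.mpr (mul_pos hδ hτ))
  have hfactor : Tendsto (fun τ => (1 - γ) / (exp (δ * τ) - 1)) (𝓝[>] 0) atTop := by
    simpa [div_eq_mul_inv] using hE.inv_tendsto_nhdsGT_zero.const_mul_atTop (sub_pos.mpr hγ)
  have hratio : Tendsto (fun τ => (exp (δ * τ) - γ) / (1 - γ)) (𝓝[>] 0) (𝓝 1) := by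
    refine (Continuous.tendsto' (by fun_prop) 0 1 ?_).mono_left nhdsWithin_le_nhds
    simp [div_self (sub_pos.mpr hγ).ne']
  have hbracket := ((hratio.mul ((tendsto_div_exp_mul_sub_one hδ.ne').mono_left
    (nhdsWithin_mono 0 fun τ hτ => ne_of_gt hτ))).mul_const K).add_const (log x)
  rw [one_mul, inv_mul_eq_div] at hbracket
  refine (hfactor.atTop_mul_neg hcond hbracket).congr' ?_
  filter_upwards [self_mem_nhdsWithin] with τ hτ
  exact (V_eq_mul_of_ne_zero hγ.ne hδ.ne' (ne_of_gt hτ)).symm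

theorem V_eq_exp_neg (hδ : δ ≠ 0) (hτ : τ ≠ 0) :
    V δ γ K x τ =
      (1 - γ * exp (-(δ * τ))) / (1 - exp (-(δ * τ))) ^ 2 * K * (τ * exp (-(δ * τ)))
      + (1 - γ) * (exp (-(δ * τ)) / (1 - exp (-(δ * τ)))) * log x := by
  have hE := exp_mul_sub_one_ne_zero hδ hτ
  rw [exp_neg]
  unfold V
  field_simp

theorem tendsto_V_atTop (hδ : 0 < δ) : Tendsto (V δ γ K x) atTop (𝓝 0) := by
  have hlin : Tendsto (fun τ => δ * τ) atTop atTop := tendsto_id.const_mul_atTop hδ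
  have he : Tendsto (fun τ => exp (-(δ * τ))) atTop (𝓝 0) :=
    tendsto_exp_neg_atTop_nhds_zero.comp hlin
  have hτe : Tendsto (fun τ => τ * exp (-(δ * τ))) atTop (𝓝 0) := by
    have := ((tendsto_pow_mul_exp_neg_atTop_nhds_zero 1).comp hlin).const_mul δ⁻¹
    rw [mul_zero] at this
    refine this.congr fun τ => ?_
    simp [field]
  have hlim := (((((tendsto_const_nhds (x := 1)).sub (he.const_mul γ)).div
    (((tendsto_const_nhds (x := 1)).sub he).pow 2) (by norm_num)).mul_const K).mul hτe).add
    ((((tendsto_const_nhds (x := 1 - γ)).mul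
      (he.div ((tendsto_const_nhds (x := 1)).sub he) (by norm_num))).mul_const (log x)))
  simp only [mul_zero, sub_zero, zero_div, zero_mul, add_zero] at hlim
  refine hlim.congr' ?_
  filter_upwards [eventually_gt_atTop 0] with τ hτ
  exact (V_eq_exp_neg hδ.ne' hτ.ne').symm

theorem V_pos_of_mul_add_mul_log_pos (hδ : 0 < δ) (hγ : γ ≤ 1) (hK : 0 ≤ K) (hτ : 0 < τ)
    (h : 0 < K * τ + (1 - γ) * log x) : 0 < V δ γ K x τ := by
  have hE : 0 < exp (δ * τ) - 1 := sub_pos.mpr (one_lt_exp_iff.mpr (mul_pos hδ hτ))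
  have hratio : 1 ≤ (exp (δ * τ) - γ) / (exp (δ * τ) - 1) := by
    rw [one_le_div hE]
    linarith
  have hV : V δ γ K x τ = ((exp (δ * τ) - γ) / (exp (δ * τ) - 1) * (K * τ)
      + (1 - γ) * log x) / (exp (δ * τ) - 1) := by
    unfold V
    field_simp
  rw [hV]
  refine div_pos ?_ hE
  linarith [le_mul_of_one_le_left (mul_nonneg hK hτ.le) hratio]

theorem exists_pos_V (hδ : 0 < δ) (hγ : γ ≤ 1) (hK : 0 < K) :
    ∃ τ₀, 0 < τ₀ ∧ 0 < V δ γ K x τ₀ := by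
  refine ⟨1 + |(1 - γ) * log x| / K, by positivity,
    V_pos_of_mul_add_mul_log_pos hδ hγ hK.le (by positivity) ?_⟩
  rw [mul_add, mul_div_cancel₀ _ hK.ne', mul_one]
  linarith [neg_abs_le ((1 - γ) * log x)]

end V

theorem optimal_tau_log_general
    (δ γ K x : ℝ) (hδ : 0 < δ) (hγ : γ ∈ Ioo (0:ℝ) 1) (hK : 0 < K)
    (hcond : K/δ + Real.log x < 0) :
    Tendsto (fun τ : ℝ =>
        (Real.exp (δ*τ) - γ)/(Real.exp (δ*τ) - 1)^2 * K * τ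
        + (1-γ)/(Real.exp (δ*τ) - 1) * Real.log x)
      (nhdsWithin 0 (Ioi 0)) atBot ∧
    Tendsto (fun τ : ℝ =>
        (Real.exp (δ*τ) - γ)/(Real.exp (δ*τ) - 1)^2 * K * τ
        + (1-γ)/(Real.exp (δ*τ) - 1) * Real.log x)
      atTop (nhds 0) ∧
    (∃ τ₀ : ℝ, 0 < τ₀ ∧
      0 < (Real.exp (δ*τ₀) - γ)/(Real.exp (δ*τ₀) - 1)^2 * K * τ₀
          + (1-γ)/(Real.exp (δ*τ₀) - 1) * Real.log x) ∧
    ∃ τstar : ℝ, 0 < τstar ∧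
      0 < (Real.exp (δ*τstar) - γ)/(Real.exp (δ*τstar) - 1)^2 * K * τstar
          + (1-γ)/(Real.exp (δ*τstar) - 1) * Real.log x ∧
      ∀ τ : ℝ, 0 < τ →
        (Real.exp (δ*τ) - γ)/(Real.exp (δ*τ) - 1)^2 * K * τ
          + (1-γ)/(Real.exp (δ*τ) - 1) * Real.log x ≤
        (Real.exp (δ*τstar) - γ)/(Real.exp (δ*τstar) - 1)^2 * K * τstar
          + (1-γ)/(Real.exp (δ*τstar) - 1) * Real.log x := by
  have hleft : Tendsto (V δ γ K x) (𝓝[>] 0) atBot := tendsto_V_nhdsGT_zero hδ hγ.2 hcond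
  have hright : Tendsto (V δ γ K x) atTop (𝓝 0) := tendsto_V_atTop hδ
  obtain ⟨τ₀, hτ₀, hVτ₀⟩ := exists_pos_V (x := x) hδ hγ.2.le hK
  obtain ⟨τstar, hτstar, hmax⟩ := exists_isMaxOn_Ioi_of_eventually_le
    ((continuousOn_V hδ.ne').mono fun τ hτ => ne_of_gt hτ) hτ₀
    (hleft.eventually (eventually_le_atBot _)) (hright.eventually (ge_mem_nhds hVτ₀))
  exact ⟨hleft, hright, ⟨τ₀, hτ₀, hVτ₀⟩,
    τstar, hτstar, hVτ₀.trans_le (hmax hτ₀), fun τ hτ => hmax hτ⟩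

theorem optimal_tau_log
    (δ γ K x : ℝ) (hδ : 0 < δ) (hγ : γ ∈ Ioo (0:ℝ) 1) (hK : 0 < K) (hx : 0 < x)
    (hcond : K/δ + Real.log x < 0) :
    Tendsto (fun τ : ℝ =>
        (Real.exp (δ*τ) - γ)/(Real.exp (δ*τ) - 1)^2 * K * τ
        + (1-γ)/(Real.exp (δ*τ) - 1) * Real.log x)
      (nhdsWithin 0 (Ioi 0)) atBot ∧
    Tendsto (fun τ : ℝ =>
        (Real.exp (δ*τ) - γ)/(Real.exp (δ*τ) - 1)^2 * K * τ
        + (1-γ)/(Real.exp (δ*τ) - 1) * Real.log x)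
      atTop (nhds 0) ∧
    (∃ τ₀ : ℝ, 0 < τ₀ ∧
      0 < (Real.exp (δ*τ₀) - γ)/(Real.exp (δ*τ₀) - 1)^2 * K * τ₀
          + (1-γ)/(Real.exp (δ*τ₀) - 1) * Real.log x) ∧
    ∃ τstar : ℝ, 0 < τstar ∧
      0 < (Real.exp (δ*τstar) - γ)/(Real.exp (δ*τstar) - 1)^2 * K * τstar
          + (1-γ)/(Real.exp (δ*τstar) - 1) * Real.log x ∧
      ∀ τ : ℝ, 0 < τ →
        (Real.exp (δ*τ) - γ)/(Real.exp (δ*τ) - 1)^2 * K * τ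
          + (1-γ)/(Real.exp (δ*τ) - 1) * Real.log x ≤
        (Real.exp (δ*τstar) - γ)/(Real.exp (δ*τstar) - 1)^2 * K * τstar
          + (1-γ)/(Real.exp (δ*τstar) - 1) * Real.log x :=
  optimal_tau_log_general δ γ K x hδ hγ hK hcond
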